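/- Let R be a commutative Noetherian ring, Φ a system of ideals of R, M an arbitrary R-module, and t a non-negative integer. Then ⋃_{i<t} Supp_R(H^i_Φ(M)) = ⋃_{𝔞∈Φ, i<t} Supp_R(H^i_𝔞(M)). -/

import Mathlib

open CategoryTheory CategoryTheory.Limits Opposite

noncomputable section

section Preliminaries

variable {R : Type} [CommRing R]

/-- A *system of ideals* of `R`: a nonempty set of ideals `Φ` such that for all
`a, b ∈ Φ` there is `c ∈ Φ` with `c ⊆ a * b`. -/
def Ideal.IsSystem (Φ : Set (Ideal R)) : Prop :=
  Φ.Nonempty ∧ ∀ a ∈ Φ, ∀ b ∈ Φ, ∃ c ∈ Φ, c ≤ a * b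

/-- The `Φ`-torsion submodule `Γ_Φ(M)`; for a system of ideals `Φ` it is
`{x ∈ M | a • x = 0 for some a ∈ Φ}`. -/
def phiTorsion (Φ : Set (Ideal R)) (M : ModuleCat.{0} R) : Submodule R M :=
  ⨆ a ∈ Φ, Submodule.torsionBySet R M (a : Set R)

lemma phiTorsion_le_comap (Φ : Set (Ideal R)) {M N : ModuleCat.{0} R} (f : M ⟶ N) :
    phiTorsion Φ M ≤ (phiTorsion Φ N).comap f.hom := by
  refine iSup₂_le fun a ha => le_trans ?_ (Submodule.comap_mono
    (le_iSup₂ (f := fun (a : Ideal R) (_ : a ∈ Φ) => Submodule.torsionBySet R N (a : Set R)) a ha))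
  intro x hx
  rw [Submodule.mem_torsionBySet_iff] at hx
  rw [Submodule.mem_comap, Submodule.mem_torsionBySet_iff]
  intro r
  have h : f.hom ((r : R) • x) = (r : R) • f.hom x := map_smul f.hom (r : R) x
  rw [hx r, map_zero] at h
  exact h.symm

/-- The `Φ`-torsion functor `Γ_Φ(-)`. -/
def phiTorsionFunctor (Φ : Set (Ideal R)) : ModuleCat.{0} R ⥤ ModuleCat.{0} R where
  obj M := ModuleCat.of R (phiTorsion Φ M)
  map {M N} f := ModuleCat.ofHom (LinearMap.restrict f.hom (fun x hx => phiTorsion_le_comap Φ f hx))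
  map_id M := by ext x; rfl
  map_comp f g := by ext x; rfl

instance (Φ : Set (Ideal R)) : (phiTorsionFunctor Φ).Additive where
  map_add := by intros; ext x; rfl

/-- General local cohomology `H^i_Φ(-)`: the `i`-th right derived functor of `Γ_Φ(-)`. -/
def glc (Φ : Set (Ideal R)) (i : ℕ) : ModuleCat.{0} R ⥤ ModuleCat.{0} R :=
  (phiTorsionFunctor Φ).rightDerived i

/-- Ordinary local cohomology `H^i_a(-)`: the `i`-th right derived functor of the
`a`-torsion functor `Γ_a(-) = Γ_Φ(-)` where `Φ = {a^n : n ∈ ℕ}`. -/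
def olc (a : Ideal R) (i : ℕ) : ModuleCat.{0} R ⥤ ModuleCat.{0} R :=
  glc {I : Ideal R | ∃ n : ℕ, I = a ^ n} i

/-- `Ext^n_R(N, M)` as an `R`-module. -/
def extM (n : ℕ) (N M : ModuleCat.{0} R) : ModuleCat.{0} R :=
  ((Ext R (ModuleCat.{0} R) n).obj (op N)).obj M

/-- A Serre subcategory of the category of `R`-modules, given by the class of its
objects: for every short exact sequence `0 → X₁ → X₂ → X₃ → 0`, `X₂` belongs to
the class iff both `X₁` and `X₃` do. -/
structure SerreClass (R : Type) [CommRing R] : Type 1 where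
  mem : ModuleCat.{0} R → Prop
  shortExact_iff : ∀ {S : ShortComplex (ModuleCat.{0} R)}, S.ShortExact →
    (mem S.X₂ ↔ mem S.X₁ ∧ mem S.X₃)

/-- `X` is an `a`-torsion module: every element is annihilated by some power of `a`. -/
def IsIdealTorsion (a : Ideal R) (X : ModuleCat.{0} R) : Prop :=
  ∀ x : X, ∃ n : ℕ, ∀ r ∈ a ^ n, r • x = 0

/-- A Serre class is a *Melkersson subcategory* with respect to `a` if for every
`a`-torsion module `X`, `(0 :_X a) ∈ S` implies `X ∈ S`. -/
def SerreClass.IsMelkersson (S : SerreClass R) (a : Ideal R) : Prop :=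
  ∀ X : ModuleCat.{0} R, IsIdealTorsion a X →
    S.mem (ModuleCat.of R (Submodule.torsionBySet R X (a : Set R))) → S.mem X

/-- The dimension of a module: the Krull dimension of its support
(so it equals `⊥ = -1` exactly for the zero module). -/
def moduleDim (R : Type) [CommRing R] (M : Type) [AddCommGroup M] [Module R M] :
    WithBot ℕ∞ :=
  Order.krullDim (Module.support R M)

/-- Interpret an integer `k ≥ -1` as an element of `{-1, 0, 1, ...} ∪ {∞}`. -/
def intDim (k : ℤ) : WithBot ℕ∞ := if k < 0 then ⊥ else ((k.toNat : ℕ∞) : WithBot ℕ∞)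

end Preliminaries

/-!
Compute everything on one injective resolution `I` of `M`: `H^i_Φ(M)` and `H^i_a(M)` are the
cohomologies of the subcomplexes `Γ_Φ(I) ⊇ Γ_a(I)` (for `a ∈ Φ`), and `p ∉ Supp` means that
every cocycle becomes a coboundary after multiplication by some `s ∉ p`.

A `Φ`-torsion cocycle is `a`-torsion for some `a ∈ Φ`, which gives `⊆` degree by degree.
For `⊇`, suppose `H^j_Φ(M)_p = 0` for all `j ≤ i` and let `z` be an `a^n`-torsion cocycle of
degree `i`. Then `s z = d w` with `w` `Φ`-torsion, and `r ↦ r w` is a map `a^n → Γ_Φ(I^{i-1})`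
of cocycles. Since `R` is Noetherian, an induction on the degree (using the vanishing in all lower
degrees and the injectivity of the `I^j`) shows that such a map from a finitely generated module
is, up to an element outside `p`, of the form `d ∘ φ`. Extending `φ` from `a^n` to `R` and
replacing `w` by `u w - d φ(1)` gives an `a^n`-torsion preimage of `u s z`.
-/

section Torsion

variable {R : Type} [CommRing R]

lemma Ideal.IsSystem.directedOn {Φ : Set (Ideal R)} (hΦ : Ideal.IsSystem Φ) :
    DirectedOn (· ≥ ·) Φ := fun a ha b hb =>
  let ⟨c, hc, hcab⟩ := hΦ.2 a ha b hb
  ⟨c, hc, hcab.trans (Ideal.mul_le_inf.trans inf_le_left),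
    hcab.trans (Ideal.mul_le_inf.trans inf_le_right)⟩

lemma Ideal.IsSystem.exists_le_pow {Φ : Set (Ideal R)} (hΦ : Ideal.IsSystem Φ) {a : Ideal R}
    (ha : a ∈ Φ) (n : ℕ) : ∃ c ∈ Φ, c ≤ a ^ n := by
  induction n with
  | zero => exact ⟨a, ha, by simp⟩
  | succ n ih =>
    obtain ⟨c, hc, hca⟩ := ih
    obtain ⟨d, hd, hdac⟩ := hΦ.2 a ha c hc
    exact ⟨d, hd, hdac.trans <| by rw [pow_succ']; exact Ideal.mul_mono_right hca⟩

lemma torsionBySet_le_phiTorsion {Ψ : Set (Ideal R)} {a : Ideal R} (ha : a ∈ Ψ)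
    (N : ModuleCat.{0} R) : Submodule.torsionBySet R N (a : Set R) ≤ phiTorsion Ψ N :=
  le_iSup₂ (f := fun (a : Ideal R) (_ : a ∈ Ψ) => Submodule.torsionBySet R N (a : Set R)) a ha

lemma mem_phiTorsion_iff {Ψ : Set (Ideal R)} (hne : Ψ.Nonempty) (hdir : DirectedOn (· ≥ ·) Ψ)
    {N : ModuleCat.{0} R} (x : N) :
    x ∈ phiTorsion Ψ N ↔ ∃ a ∈ Ψ, x ∈ Submodule.torsionBySet R N (a : Set R) := by
  have : Nonempty Ψ := hne.to_subtype
  rw [phiTorsion, iSup_subtype', Submodule.mem_iSup_of_directed, Subtype.exists]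
  · simp only [exists_prop]
  · rintro ⟨a, ha⟩ ⟨b, hb⟩
    obtain ⟨c, hc, hac, hbc⟩ := hdir a ha b hb
    exact ⟨⟨c, hc⟩, Submodule.torsionBySet_le_torsionBySet_of_subset hac,
      Submodule.torsionBySet_le_torsionBySet_of_subset hbc⟩

lemma mem_phiTorsion_pow_iff {a : Ideal R} {N : ModuleCat.{0} R} (x : N) :
    x ∈ phiTorsion {I : Ideal R | ∃ n : ℕ, I = a ^ n} N ↔
      ∃ n : ℕ, x ∈ Submodule.torsionBySet R N ((a ^ n : Ideal R) : Set R) := by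
  rw [mem_phiTorsion_iff (Ψ := {I : Ideal R | ∃ n : ℕ, I = a ^ n}) ⟨a ^ 0, 0, rfl⟩]
  · constructor
    · rintro ⟨_, ⟨n, rfl⟩, hx⟩
      exact ⟨n, hx⟩
    · rintro ⟨n, hx⟩
      exact ⟨_, ⟨n, rfl⟩, hx⟩
  · rintro _ ⟨m, rfl⟩ _ ⟨n, rfl⟩
    exact ⟨a ^ max m n, ⟨_, rfl⟩, Ideal.pow_le_pow_right (le_max_left m n),
      Ideal.pow_le_pow_right (le_max_right m n)⟩

lemma phiTorsion_pow_le {Φ : Set (Ideal R)} (hΦ : Ideal.IsSystem Φ) {a : Ideal R}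
    (ha : a ∈ Φ) (N : ModuleCat.{0} R) :
    phiTorsion {I : Ideal R | ∃ n : ℕ, I = a ^ n} N ≤ phiTorsion Φ N := by
  refine iSup₂_le ?_
  rintro _ ⟨n, rfl⟩
  obtain ⟨c, hc, hca⟩ := hΦ.exists_le_pow ha n
  exact (Submodule.torsionBySet_le_torsionBySet_of_subset hca).trans
    (torsionBySet_le_phiTorsion hc N)

end Torsion

section Support

variable {R : Type} [CommRing R]

lemma CategoryTheory.ShortComplex.notMem_support_homology_iff
    (X : ShortComplex (ModuleCat.{0} R)) (p : PrimeSpectrum R) :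
    p ∉ Module.support R X.homology ↔
      ∀ y : X.X₂, X.g y = 0 → ∃ s ∉ p.asIdeal, ∃ x : X.X₁, X.f x = s • y := by
  let e : X.homology ≃ₗ[R] LinearMap.ker X.g.hom ⧸ LinearMap.range X.moduleCatToCycles :=
    X.moduleCatHomologyIso.toLinearEquiv
  rw [e.support_eq, Module.notMem_support_iff']
  constructor
  · intro h y hy
    obtain ⟨s, hs, hsy⟩ := h (Submodule.Quotient.mk (⟨y, hy⟩ : LinearMap.ker X.g.hom))
    rw [← Submodule.Quotient.mk_smul, Submodule.Quotient.mk_eq_zero] at hsy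
    obtain ⟨x, hx⟩ := hsy
    exact ⟨s, hs, x, congrArg Subtype.val hx⟩
  · intro h q
    obtain ⟨⟨y, hy⟩, rfl⟩ := Submodule.Quotient.mk_surjective _ q
    obtain ⟨s, hs, x, hx⟩ := h y hy
    refine ⟨s, hs, ?_⟩
    rw [← Submodule.Quotient.mk_smul, Submodule.Quotient.mk_eq_zero]
    exact ⟨x, Subtype.ext hx⟩

/-- Every cocycle of `K` lying in `T` becomes, after multiplication by an element of `S`, the
coboundary of an element of `T`; for a subcomplex `T` this says `S⁻¹ H^j(T) = 0`.
In degree `0` we have `j - 1 = 0` and `K.d 0 0 = 0`. -/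
def IsTorsionHomologyAt (K : CochainComplex (ModuleCat.{0} R) ℕ) (T : ∀ n, Submodule R (K.X n))
    (S : Submonoid R) (j : ℕ) : Prop :=
  ∀ y ∈ T j, K.d j (j + 1) y = 0 → ∃ s ∈ S, ∃ x ∈ T (j - 1), K.d (j - 1) j x = s • y

lemma notMem_support_glc_iff {M : ModuleCat.{0} R} (Ψ : Set (Ideal R))
    (I : InjectiveResolution M) (j : ℕ) (p : PrimeSpectrum R) :
    p ∉ Module.support R ((glc Ψ j).obj M) ↔
      IsTorsionHomologyAt I.cocomplex (fun n => phiTorsion Ψ (I.cocomplex.X n))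
        p.asIdeal.primeCompl j := by
  let K := ((phiTorsionFunctor Ψ).mapHomologicalComplex (ComplexShape.up ℕ)).obj I.cocomplex
  have hprev : (ComplexShape.up ℕ).prev j = j - 1 := by
    cases j <;> simp
  let e : (glc Ψ j).obj M ≃ₗ[R] (K.sc' (j - 1) j (j + 1)).homology :=
    (I.isoRightDerivedObj (phiTorsionFunctor Ψ) j ≪≫
      K.homologyIsoSc' (j - 1) j (j + 1) hprev (by simp)).toLinearEquiv
  rw [e.support_eq, ShortComplex.notMem_support_homology_iff]
  constructor
  · intro h y hy hdy
    obtain ⟨s, hs, x, hdx⟩ := h ⟨y, hy⟩ (Subtype.ext hdy)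
    exact ⟨s, hs, x.1, x.2, congrArg Subtype.val hdx⟩
  · rintro h ⟨y, hy⟩ hdy
    obtain ⟨s, hs, x, hx, hdx⟩ := h y hy (congrArg Subtype.val hdy)
    exact ⟨s, hs, ⟨x, hx⟩, Subtype.ext hdx⟩

end Support

section Lifting

variable {R : Type} [CommRing R]

lemma Submonoid.exists_smul_mem_of_forall {M : Type*} [AddCommMonoid M] [Module R M]
    (S : Submonoid R) (N : Submodule R M) {ι : Type*} [Fintype ι] {y : ι → M}
    (h : ∀ i, ∃ s ∈ S, s • y i ∈ N) : ∃ s ∈ S, ∀ i, s • y i ∈ N := by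
  classical
  choose s hs hsy using h
  refine ⟨∏ i, s i, S.prod_mem fun i _ => hs i, fun i => ?_⟩
  rw [← Finset.prod_erase_mul _ _ (Finset.mem_univ i), mul_smul]
  exact N.smul_mem _ (hsy i)

lemma LinearMap.exists_comp_eq_of_ker_le {F A Y : Type*} [AddCommGroup F] [Module R F]
    [AddCommGroup A] [Module R A] [AddCommGroup Y] [Module R Y] {π : F →ₗ[R] A}
    (hπ : Function.Surjective π) {θ : F →ₗ[R] Y} (h : LinearMap.ker π ≤ LinearMap.ker θ) :
    ∃ φ : A →ₗ[R] Y, φ ∘ₗ π = θ :=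
  ⟨(LinearMap.ker π).liftQ θ h ∘ₗ (π.quotKerEquivOfSurjective hπ).symm.toLinearMap,
    LinearMap.ext fun x => by simp⟩

lemma exists_le_ker_sub_comp (E : ModuleCat.{0} R) [Injective E] {F Y : Type*}
    [AddCommGroup F] [Module R F] [AddCommGroup Y] [Module R Y] (g : E →ₗ[R] Y)
    (χ : F →ₗ[R] Y) (N : Submodule R F) (φ : N →ₗ[R] E) (h : g ∘ₗ φ = χ ∘ₗ N.subtype) :
    ∃ φ' : F →ₗ[R] E, N ≤ LinearMap.ker (χ - g ∘ₗ φ') := by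
  have := Module.injective_module_of_injective_object R E
  obtain ⟨φ', hφ'⟩ := Module.Injective.extension_property R E N F N.subtype
    N.injective_subtype φ
  refine ⟨φ', fun x hx => ?_⟩
  have hφ'x : φ' x = φ ⟨x, hx⟩ := congr($hφ' ⟨x, hx⟩)
  have hgφ : g (φ ⟨x, hx⟩) = χ x := congr($h ⟨x, hx⟩)
  simp [hφ'x, hgφ]

lemma HomologicalComplex.d_hom_comp_d_hom {ι : Type*} {c : ComplexShape ι}
    (K : HomologicalComplex (ModuleCat.{0} R) c) (i j k : ι) :
    (K.d j k).hom ∘ₗ (K.d i j).hom = 0 := by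
  rw [← ModuleCat.hom_comp, K.d_comp_d, ModuleCat.hom_zero]

end Lifting

section Complex

variable {R : Type} [CommRing R] {K : CochainComplex (ModuleCat.{0} R) ℕ}
  {T : ∀ n, Submodule R (K.X n)} {S : Submonoid R}

lemma IsTorsionHomologyAt.exists_lift {j : ℕ} (hT : IsTorsionHomologyAt K T S j) {A : Type*}
    [AddCommGroup A] [Module R A] {ψ : A →ₗ[R] K.X j} (hψT : LinearMap.range ψ ≤ T j)
    (hψd : (K.d j (j + 1)).hom ∘ₗ ψ = 0) {k : ℕ} (π : (Fin k → R) →ₗ[R] A) :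
    ∃ s ∈ S, ∃ χ : (Fin k → R) →ₗ[R] K.X (j - 1),
      LinearMap.range χ ≤ T (j - 1) ∧ (K.d (j - 1) j).hom ∘ₗ χ = s • ψ ∘ₗ π := by
  have h (l : Fin k) :
      ∃ s ∈ S, s • ψ (π (Pi.single l 1)) ∈ (T (j - 1)).map (K.d (j - 1) j).hom := by
    obtain ⟨s, hs, x, hx, hdx⟩ := hT _ (hψT ⟨_, rfl⟩) congr($hψd (π (Pi.single l 1)))
    exact ⟨s, hs, x, hx, hdx⟩
  obtain ⟨s, hs, hsψ⟩ := S.exists_smul_mem_of_forall _ h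
  choose x hx hdx using hsψ
  refine ⟨s, hs, Fintype.linearCombination R x, ?_, ?_⟩
  · rw [Fintype.range_linearCombination, Submodule.span_le]
    rintro _ ⟨l, rfl⟩
    exact hx l
  · ext l
    simp [hdx]

-- Induction on `j`: lift `ψ` along a presentation `R^k ↠ A`, fix the lift on the relations by the
-- induction hypothesis and the injectivity of `K.X (j - 1)`, then descend to `A`.
theorem exists_d_comp_eq_smul_of_isTorsionHomologyAt [IsNoetherianRing R]
    [∀ n, Injective (K.X n)] {j : ℕ} (hT : ∀ j' ≤ j, IsTorsionHomologyAt K T S j')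
    {A : Type} [AddCommGroup A] [Module R A] [Module.Finite R A] (ψ : A →ₗ[R] K.X j)
    (hψT : LinearMap.range ψ ≤ T j) (hψd : (K.d j (j + 1)).hom ∘ₗ ψ = 0) :
    ∃ u ∈ S, ∃ φ : A →ₗ[R] K.X (j - 1), (K.d (j - 1) j).hom ∘ₗ φ = u • ψ := by
  induction j generalizing A with
  | zero =>
    obtain ⟨k, π, hπ⟩ := Module.Finite.exists_fin' R A
    obtain ⟨s, hs, χ, -, hχ⟩ := (hT 0 le_rfl).exists_lift hψT hψd π
    refine ⟨s, hs, 0, ?_⟩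
    rw [K.shape 0 0 (by simp), ModuleCat.hom_zero, LinearMap.zero_comp] at hχ ⊢
    rw [← LinearMap.cancel_right hπ, LinearMap.smul_comp, ← hχ, LinearMap.zero_comp]
  | succ j ih =>
    obtain ⟨k, π, hπ⟩ := Module.Finite.exists_fin' R A
    obtain ⟨s, hs, χ, hχT, hχ⟩ : ∃ s ∈ S, ∃ χ : (Fin k → R) →ₗ[R] K.X j,
        LinearMap.range χ ≤ T j ∧ (K.d j (j + 1)).hom ∘ₗ χ = s • ψ ∘ₗ π :=
      (hT (j + 1) le_rfl).exists_lift hψT hψd π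
    obtain ⟨u, hu, φ, hφ⟩ := ih (fun j' hj' => hT j' (hj'.trans j.le_succ))
      (χ ∘ₗ (LinearMap.ker π).subtype) ((LinearMap.range_comp_le_range _ _).trans hχT) (by
        ext ⟨x, hx⟩
        have hπx : π x = 0 := hx
        simp [← LinearMap.comp_assoc, hχ, hπx])
    obtain ⟨φ', hφ'⟩ := exists_le_ker_sub_comp (K.X (j - 1)) (K.d (j - 1) j).hom (u • χ)
      (LinearMap.ker π) φ (by rw [hφ, LinearMap.smul_comp])
    obtain ⟨φ₀, hφ₀⟩ := LinearMap.exists_comp_eq_of_ker_le hπ hφ'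
    refine ⟨u * s, S.mul_mem hu hs, φ₀, ?_⟩
    rw [← LinearMap.cancel_right hπ]
    calc (K.d j (j + 1)).hom ∘ₗ φ₀ ∘ₗ π
        = (K.d j (j + 1)).hom ∘ₗ (u • χ - (K.d (j - 1) j).hom ∘ₗ φ') := by
          rw [hφ₀]
      _ = u • (K.d j (j + 1)).hom ∘ₗ χ := by
          rw [LinearMap.comp_sub, ← LinearMap.comp_assoc, K.d_hom_comp_d_hom, LinearMap.zero_comp,
            sub_zero, LinearMap.comp_smul]
      _ = (u * s) • ψ ∘ₗ π := by rw [hχ, smul_smul]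

theorem isTorsionHomologyAt_torsionBySet [IsNoetherianRing R] [∀ n, Injective (K.X n)] {i : ℕ}
    (hT : ∀ j ≤ i, IsTorsionHomologyAt K T S j) (b : Ideal R)
    (hb : ∀ n, Submodule.torsionBySet R (K.X n) (b : Set R) ≤ T n) :
    IsTorsionHomologyAt K (fun n => Submodule.torsionBySet R (K.X n) (b : Set R)) S i := by
  intro z hzb hdz
  obtain ⟨s, hs, w, hwT, hdw⟩ := hT i le_rfl z (hb i hzb) hdz
  cases i with
  | zero =>
    refine ⟨s, hs, 0, zero_mem _, ?_⟩
    rw [map_zero, ← hdw, K.shape 0 0 (by simp)]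
    rfl
  | succ m =>
    change K.d m (m + 1) w = s • z at hdw
    let χ : R →ₗ[R] K.X m := LinearMap.toSpanSingleton R _ w
    obtain ⟨u, hu, φ, hφ⟩ := exists_d_comp_eq_smul_of_isTorsionHomologyAt
      (fun j hj => hT j (hj.trans m.le_succ)) (χ ∘ₗ b.subtype) (by
        rintro _ ⟨r, rfl⟩
        exact (T m).smul_mem _ hwT) (by
        ext ⟨r, hr⟩
        simp [χ, hdw, smul_comm r s, (Submodule.mem_torsionBySet_iff _ _).mp hzb ⟨r, hr⟩])
    obtain ⟨φ', hφ'⟩ := exists_le_ker_sub_comp (K.X (m - 1)) (K.d (m - 1) m).hom (u • χ) b φ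
      (by rw [hφ, LinearMap.smul_comp])
    refine ⟨u * s, S.mul_mem hu hs, (u • χ - (K.d (m - 1) m).hom ∘ₗ φ') 1, ?_, ?_⟩
    · rw [Submodule.mem_torsionBySet_iff]
      rintro ⟨r, hr⟩
      rw [← map_smul, smul_eq_mul, mul_one]
      exact hφ' hr
    · change ((K.d m (m + 1)).hom ∘ₗ (u • χ - (K.d (m - 1) m).hom ∘ₗ φ')) 1 = (u * s) • z
      rw [LinearMap.comp_sub, ← LinearMap.comp_assoc, K.d_hom_comp_d_hom, LinearMap.zero_comp,
        sub_zero]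
      simp [χ, hdw, smul_smul]

end Complex

section Systems

variable {R : Type} [CommRing R] {K : CochainComplex (ModuleCat.{0} R) ℕ} {S : Submonoid R}
  {Φ : Set (Ideal R)}

theorem isTorsionHomologyAt_phiTorsion_of_forall_pow (hΦ : Ideal.IsSystem Φ) {j : ℕ}
    (h : ∀ a ∈ Φ, IsTorsionHomologyAt K
      (fun n => phiTorsion {I : Ideal R | ∃ m : ℕ, I = a ^ m} (K.X n)) S j) :
    IsTorsionHomologyAt K (fun n => phiTorsion Φ (K.X n)) S j := by
  intro y hy hdy
  obtain ⟨a, ha, hya⟩ := (mem_phiTorsion_iff hΦ.1 hΦ.directedOn y).mp hy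
  have hya' : y ∈ phiTorsion {I : Ideal R | ∃ m : ℕ, I = a ^ m} (K.X j) :=
    (mem_phiTorsion_pow_iff y).mpr ⟨1, by rwa [pow_one]⟩
  obtain ⟨s, hs, x, hx, hdx⟩ := h a ha y hya' hdy
  exact ⟨s, hs, x, phiTorsion_pow_le hΦ ha _ hx, hdx⟩

theorem isTorsionHomologyAt_phiTorsion_pow [IsNoetherianRing R] [∀ n, Injective (K.X n)]
    (hΦ : Ideal.IsSystem Φ) {a : Ideal R} (ha : a ∈ Φ) {i : ℕ}
    (hT : ∀ j ≤ i, IsTorsionHomologyAt K (fun n => phiTorsion Φ (K.X n)) S j) :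
    IsTorsionHomologyAt K
      (fun n => phiTorsion {I : Ideal R | ∃ m : ℕ, I = a ^ m} (K.X n)) S i := by
  intro z hz hdz
  obtain ⟨m, hzm⟩ := (mem_phiTorsion_pow_iff z).mp hz
  have hle (n : ℕ) : Submodule.torsionBySet R (K.X n) ((a ^ m : Ideal R) : Set R) ≤
      phiTorsion {I : Ideal R | ∃ m : ℕ, I = a ^ m} (K.X n) :=
    torsionBySet_le_phiTorsion (Ψ := {I : Ideal R | ∃ m : ℕ, I = a ^ m}) ⟨m, rfl⟩ _
  obtain ⟨s, hs, x, hx, hdx⟩ := isTorsionHomologyAt_torsionBySet hT (a ^ m)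
    (fun n => (hle n).trans (phiTorsion_pow_le hΦ ha _)) z hzm hdz
  exact ⟨s, hs, x, hle _ hx, hdx⟩

end Systems

/-- **Corollary 3.9.** `⋃_{i<t} Supp H^i_Φ(M) = ⋃_{a∈Φ, i<t} Supp H^i_a(M)`. -/
theorem stmt17 (R : Type) [CommRing R] [IsNoetherianRing R]
    (Φ : Set (Ideal R)) (hΦ : Ideal.IsSystem Φ)
    (M : ModuleCat.{0} R) (t : ℕ) :
    (⋃ i ∈ Set.Iio t, Module.support R ((glc Φ i).obj M)) =
      ⋃ a ∈ Φ, ⋃ i ∈ Set.Iio t, Module.support R ((olc a i).obj M) := by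
  obtain ⟨I⟩ := HasInjectiveResolution.out (Z := M)
  ext p
  simp only [Set.mem_iUnion, Set.mem_Iio, exists_prop]
  constructor
  · rintro ⟨i, hit, hp⟩
    by_contra! h
    refine (notMem_support_glc_iff Φ I i p).mpr ?_ hp
    exact isTorsionHomologyAt_phiTorsion_of_forall_pow hΦ fun a ha =>
      (notMem_support_glc_iff _ I i p).mp (h a ha i hit)
  · rintro ⟨a, ha, i, hit, hp⟩
    by_contra! h
    refine (notMem_support_glc_iff _ I i p).mpr ?_ hp
    exact isTorsionHomologyAt_phiTorsion_pow hΦ ha fun j hj =>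
      (notMem_support_glc_iff Φ I j p).mp (h j (hj.trans_lt hit))

end
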